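/- arXiv:1307.1326 — 4 statements merged into one kernel-verified Lean document; each statement's English description precedes it below -/
import Mathlib

section
/- For a nonempty finite set F of positive integers with maximum element f_k, the map I(F) = {1, 2, ..., f_k} \ {f_k - f : f ∈ F} is an involution on the collection of finite sets of positive integers, i.e., I(I(F)) = F. -/
open Finset

/-- The transform `I(F) = {1,...,max F} \ {max F - f : f ∈ F}` on finite sets of
positive integers. -/
def involI (F : Finset ℕ) : Finset ℕ :=
  (Finset.Icc 1 (F.sup id)) \ (F.image (fun f => F.sup id - f))

/-- `I` is an involution on nonempty finite sets of positive integers. -/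
theorem involI_involutive (F : Finset ℕ) (hne : F.Nonempty)
    (hpos : ∀ f ∈ F, 0 < f) : involI (involI F) = F := by
  set M := F.sup id with hM
  obtain ⟨m, hmF, hmeq⟩ := Finset.exists_mem_eq_sup F hne id
  have hMF : M ∈ F := by rw [hM, hmeq]; exact hmF
  have hM1 : 1 ≤ M := hpos M hMF
  have hle : ∀ f ∈ F, f ≤ M := fun f hf => Finset.le_sup (f := id) hf
  -- M ∈ involI F
  have hMmem : M ∈ involI F := by
    simp only [involI, Finset.mem_sdiff, Finset.mem_Icc, Finset.mem_image, ← hM]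
    refine ⟨⟨hM1, le_refl _⟩, ?_⟩
    rintro ⟨f, hf, hfeq⟩
    have := hpos f hf
    omega
  -- sup of involI F is M
  have hsup : (involI F).sup id = M := by
    apply le_antisymm
    · apply Finset.sup_le
      intro g hg
      simp only [involI, Finset.mem_sdiff, Finset.mem_Icc, ← hM] at hg
      exact hg.1.2
    · exact Finset.le_sup (f := id) hMmem
  have hsup' : ((Finset.Icc 1 M \ F.image (fun f => M - f)).sup id) = M := hsup
  ext x
  simp only [involI, hsup, hsup', Finset.mem_sdiff, Finset.mem_Icc, Finset.mem_image, ← hM]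
  constructor
  · rintro ⟨⟨hx1, hxM⟩, hnot⟩
    by_contra hxF
    apply hnot
    refine ⟨M - x, ?_, ?_⟩
    · refine ⟨⟨?_, ?_⟩, ?_⟩
      · -- 1 ≤ M - x, need x < M, i.e. x ≠ M; M ∈ F, x ∉ F
        have : x ≠ M := fun h => hxF (h ▸ hMF)
        omega
      · omega
      · rintro ⟨f, hf, hfeq⟩
        have := hle f hf
        have : f = x := by omega
        exact hxF (this ▸ hf)
    · omega
  · intro hxF
    refine ⟨⟨hpos x hxF, hle x hxF⟩, ?_⟩
    rintro ⟨g, ⟨⟨hg1, hgM⟩, hgnot⟩, hgeq⟩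
    apply hgnot
    exact ⟨x, hxF, by omega⟩
end

section
/- The Charlier polynomials satisfy the duality (-1)^m a^m n! c_n^a(m) = (-1)^n a^n m! c_m^a(n) for all nonnegative integers n, m. -/
open Finset

/-- The Charlier polynomial `c_n^a(x) = (1/n!) ∑_{j=0}^n (-a)^{n-j} C(n,j) C(x,j) j!`,
where `C(x,j) j! = ∏_{i=0}^{j-1} (x - i)`. -/
noncomputable def charlier (a : ℂ) (n : ℕ) (x : ℂ) : ℂ :=
  (1 / n.factorial) * ∑ j ∈ Finset.range (n + 1),
    (-a) ^ (n - j) * (n.choose j) * ∏ i ∈ Finset.range j, (x - i)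

lemma prod_range_cast_sub (m j : ℕ) :
    ∏ i ∈ Finset.range j, ((m : ℂ) - i) = (m.descFactorial j : ℂ) := by
  induction j with
  | zero => simp
  | succ j ih =>
    rw [Finset.prod_range_succ, ih, Nat.descFactorial_succ]
    rcases le_or_gt j m with h | h
    · push_cast [Nat.cast_sub h]; ring
    · have : (m.descFactorial j : ℂ) = 0 := by
        rw [Nat.descFactorial_eq_zero_iff_lt.2 h]; simp
      simp [this, Nat.sub_eq_zero_of_le h.le]

lemma factorial_mul_charlier (a : ℂ) (n m : ℕ) :
    (n.factorial : ℂ) * charlier a n m =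
      ∑ j ∈ Finset.range (n + 1),
        (-a) ^ (n - j) * (n.choose j) * ((m.choose j : ℂ) * (j.factorial : ℂ)) := by
  have hn : (n.factorial : ℂ) ≠ 0 := Nat.cast_ne_zero.mpr n.factorial_ne_zero
  unfold charlier
  rw [← mul_assoc, mul_one_div, div_self hn, one_mul]
  refine Finset.sum_congr rfl fun j _ => ?_
  rw [prod_range_cast_sub, Nat.descFactorial_eq_factorial_mul_choose]
  push_cast; ring

/-- Duality of the Charlier polynomials:
`(-1)^m a^m n! c_n^a(m) = (-1)^n a^n m! c_m^a(n)`. -/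
theorem charlier_duality (a : ℂ) (ha : a ≠ 0) (n m : ℕ) :
    (-1) ^ m * a ^ m * (n.factorial : ℂ) * charlier a n m =
      (-1) ^ n * a ^ n * (m.factorial : ℂ) * charlier a m n := by
  set N := max n m with hN
  have key : ∀ p q : ℕ, p ≤ N →
      (-1 : ℂ) ^ q * a ^ q * (p.factorial : ℂ) * charlier a p q =
      ∑ j ∈ Finset.range (N + 1),
        (-1) ^ q * a ^ q * ((-a) ^ (p - j) * (p.choose j) *
          ((q.choose j : ℂ) * (j.factorial : ℂ))) := by
    intro p q hpN
    rw [mul_assoc, factorial_mul_charlier, Finset.mul_sum]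
    refine Finset.sum_subset (fun x hx => ?_) (fun x _ hx => ?_)
    · simp only [Finset.mem_range] at *; omega
    · simp only [Finset.mem_range, not_lt] at hx
      have : p.choose x = 0 := Nat.choose_eq_zero_of_lt (by omega)
      simp [this]
  rw [key n m (le_max_left n m), key m n (le_max_right n m)]
  refine Finset.sum_congr rfl fun j _ => ?_
  by_cases h : j ≤ n ∧ j ≤ m
  · obtain ⟨h1, h2⟩ := h
    have e1 : m + (n - j) = n + (m - j) := by omega
    have hpow : (-1 : ℂ) ^ m * a ^ m * ((-1 : ℂ) ^ (n - j) * a ^ (n - j)) =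
        (-1 : ℂ) ^ n * a ^ n * ((-1 : ℂ) ^ (m - j) * a ^ (m - j)) := by
      rw [mul_mul_mul_comm, ← pow_add, ← pow_add, e1, pow_add, pow_add]; ring
    calc (-1 : ℂ) ^ m * a ^ m * ((-a) ^ (n - j) * (n.choose j) *
          ((m.choose j : ℂ) * (j.factorial : ℂ)))
        = ((-1 : ℂ) ^ m * a ^ m * ((-1 : ℂ) ^ (n - j) * a ^ (n - j))) *
            ((n.choose j : ℂ) * ((m.choose j : ℂ) * (j.factorial : ℂ))) := by
          rw [neg_pow]; ring
      _ = ((-1 : ℂ) ^ n * a ^ n * ((-1 : ℂ) ^ (m - j) * a ^ (m - j))) *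
            ((n.choose j : ℂ) * ((m.choose j : ℂ) * (j.factorial : ℂ))) := by rw [hpow]
      _ = (-1 : ℂ) ^ n * a ^ n * ((-a) ^ (m - j) * (m.choose j) *
            ((n.choose j : ℂ) * (j.factorial : ℂ))) := by rw [neg_pow]; ring
  · rcases not_and_or.mp h with h' | h'
    · have : n.choose j = 0 := Nat.choose_eq_zero_of_lt (by omega)
      simp [this]
    · have : m.choose j = 0 := Nat.choose_eq_zero_of_lt (by omega)
      simp [this]
end

section
/- For integers n < 0 and m ≥ 1, with G = {1,...,m} and p_G̃(x) = ∏_{i=1}^m (x - i - 1) (so 1/p_G̃'(i+1) = (-1)^{m+i} C(m-1, i-1)/(m-1)!), the sum ∑_{i=1}^m ((-1)^{i+1}/(m-1)!) C(m-1,i-1) i! a^{m-i} c_i^{-a}(-n-1) equals (-1)^{m+1} a^{m+n+1} (-n-1)! ∑_{i=1}^m c_{-n-1}^{-a}(i)/p_G̃'(i+1). Consequently this sum vanishes for 1-m ≤ n < 0. -/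
/-
Since `∏_{k<j} (N - k) = j! C(N, j)`, for natural `i, N` one has
`a^N · i! c_i^{-a}(N) = ∑_j C(i,j) C(N,j) j! a^{i+N-j}`, which is symmetric in `i` and `N`.
This duality turns each summand into a multiple of `c_N^{-a}(i)` with `N = -n-1`. The remaining
sum over `i` is, up to a constant, the `(m-1)`-st forward difference at `1` of the polynomial
`c_N^{-a}`, which vanishes as soon as its degree `N` is less than `m - 1`.
-/

open Finset

open Polynomial Nat

theorem sum_range_neg_one_pow_mul_choose_mul_eval_eq_zero {R : Type*} [CommRing R] {P : R[X]}
    {n : ℕ} (hP : P.natDegree < n) (y : R) :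
    ∑ k ∈ range (n + 1), (-1 : R) ^ (n - k) * n.choose k * P.eval (y + k) = 0 := by
  have := congr_fun (fwdDiff_iter_eq_zero_of_degree_lt hP) y
  simpa [fwdDiff_iter_eq_sum_shift, zsmul_eq_mul] using this

noncomputable def charlierPoly (a : ℂ) (n : ℕ) : ℂ[X] :=
  C (1 / n ! : ℂ) *
    ∑ j ∈ range (n + 1), C ((-a) ^ (n - j) * n.choose j) * descPochhammer ℂ j

theorem eval_charlierPoly (a : ℂ) (n : ℕ) (x : ℂ) :
    (charlierPoly a n).eval x = charlier a n x := by
  simp [charlierPoly, charlier, eval_finsetSum, descPochhammer_eval_eq_prod_range]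

theorem natDegree_charlierPoly_le (a : ℂ) (n : ℕ) : (charlierPoly a n).natDegree ≤ n := by
  refine (natDegree_C_mul_le _ _).trans (natDegree_sum_le_of_forall_le _ _ fun j hj => ?_)
  refine (natDegree_C_mul_le _ _).trans ?_
  rw [descPochhammer_natDegree]
  exact mem_range_succ_iff.mp hj

theorem pow_mul_factorial_mul_charlier_neg (a : ℂ) (i N : ℕ) :
    a ^ N * (i ! * charlier (-a) i N) =
      ∑ j ∈ range (i + 1), (i.choose j * N.choose j : ℂ) * (j ! * a ^ (i + N - j)) := by
  rw [charlier, ← mul_assoc (i ! : ℂ),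
    mul_one_div_cancel (by exact_mod_cast i.factorial_ne_zero), one_mul, mul_sum]
  refine sum_congr rfl fun j hj => ?_
  have hji : j ≤ i := mem_range_succ_iff.mp hj
  rw [← descPochhammer_eval_eq_prod_range, descPochhammer_eval_eq_descFactorial,
    descFactorial_eq_factorial_mul_choose, neg_neg, show i + N - j = N + (i - j) by omega,
    pow_add]
  push_cast
  ring

theorem sum_range_choose_mul_eq_of_le {R : Type*} [Semiring R] {i K : ℕ} (h : i ≤ K)
    (g : ℕ → R) :
    ∑ j ∈ range (i + 1), (i.choose j : R) * g j =
      ∑ j ∈ range (K + 1), (i.choose j : R) * g j :=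
  sum_subset (range_subset_range.2 (by omega)) fun j _ hj => by
    rw [choose_eq_zero_of_lt (by simpa using hj), cast_zero, zero_mul]

theorem pow_mul_factorial_mul_charlier_neg_comm (a : ℂ) (i N : ℕ) :
    a ^ N * (i ! * charlier (-a) i N) = a ^ i * (N ! * charlier (-a) N i) := by
  simp only [pow_mul_factorial_mul_charlier_neg, mul_assoc (_ : ℂ) (_ : ℂ)]
  rw [sum_range_choose_mul_eq_of_le (le_add_right i N),
    sum_range_choose_mul_eq_of_le (le_add_left N i)]
  refine sum_congr rfl fun j _ => ?_
  rw [add_comm N i]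
  ring

theorem sum_Icc_neg_one_pow_mul_choose_mul_eval_eq_zero {R : Type*} [CommRing R] {P : R[X]}
    {M : ℕ} (hP : P.natDegree < M) :
    ∑ i ∈ Icc 1 (M + 1), (-1 : R) ^ (M + 1 + i) * M.choose (i - 1) * P.eval (i : R) = 0 := by
  rw [← Ico_add_one_right_eq_Icc, sum_Ico_eq_sum_range, add_tsub_cancel_right,
    ← sum_range_neg_one_pow_mul_choose_mul_eval_eq_zero hP 1]
  refine sum_congr rfl fun k hk => ?_
  have hkM : k ≤ M := mem_range_succ_iff.mp hk
  rw [show M + 1 + (1 + k) = (M - k) + 2 * (k + 1) by omega, pow_add, pow_mul, neg_one_sq, one_pow,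
    mul_one, add_tsub_cancel_left, cast_add, cast_one]

theorem pow_sub_mul_factorial_mul_charlier_neg {a : ℂ} (ha : a ≠ 0) {i m : ℕ} (him : i ≤ m)
    (N : ℕ) :
    a ^ (m - i) * (i ! * charlier (-a) i N) = a ^ ((m : ℤ) - N) * (N ! * charlier (-a) N i) := by
  refine mul_left_cancel₀ (pow_ne_zero N ha) ?_
  rw [mul_left_comm, pow_mul_factorial_mul_charlier_neg_comm, ← mul_assoc, ← pow_add,
    Nat.sub_add_cancel him, ← mul_assoc (a ^ N), ← zpow_natCast a N, ← zpow_add₀ ha,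
    add_sub_cancel, zpow_natCast]

theorem charlier_dual_summand_eq {a : ℂ} (ha : a ≠ 0) {i m : ℕ} (him : i ≤ m) (N : ℕ) :
    ((-1 : ℂ) ^ (i + 1) / (m - 1)!) * ((m - 1).choose (i - 1)) * i ! * a ^ (m - i) *
        charlier (-a) i N =
      (-1 : ℂ) ^ (m + 1) * a ^ ((m : ℤ) - N) * N ! *
        (charlier (-a) N i * ((-1 : ℂ) ^ (m + i) * ((m - 1).choose (i - 1)) / (m - 1)!)) := by
  have hsign : (-1 : ℂ) ^ (i + 1) = (-1) ^ (m + 1) * (-1) ^ (m + i) := by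
    rw [← pow_add, show m + 1 + (m + i) = (i + 1) + 2 * m by omega, pow_add (-1 : ℂ) (i + 1),
      pow_mul, neg_one_sq, one_pow, mul_one]
  linear_combination ((-1 : ℂ) ^ (i + 1) / (m - 1)! * (m - 1).choose (i - 1)) *
      pow_sub_mul_factorial_mul_charlier_neg ha him N +
    (N ! * charlier (-a) N i * a ^ ((m : ℤ) - N) * (m - 1).choose (i - 1) / (m - 1)!) * hsign

theorem charlier_dual_sum_general (a : ℂ) (ha : a ≠ 0) (m : ℕ)
    (n : ℤ) (hn : n < 0) :
    (∑ i ∈ Finset.Icc 1 m, ((-1 : ℂ) ^ (i + 1) / ((m - 1).factorial : ℂ)) *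
        ((m - 1).choose (i - 1)) * (i.factorial : ℂ) * a ^ (m - i) *
        charlier (-a) i (-(n : ℂ) - 1) =
      (-1 : ℂ) ^ (m + 1) * a ^ ((m : ℤ) + n + 1) * (((-n - 1).toNat.factorial : ℂ)) *
        ∑ i ∈ Finset.Icc 1 m, charlier (-a) (-n - 1).toNat (i : ℂ) *
          ((-1 : ℂ) ^ (m + i) * ((m - 1).choose (i - 1)) / ((m - 1).factorial : ℂ))) ∧
    (1 - (m : ℤ) ≤ n →
      ∑ i ∈ Finset.Icc 1 m, ((-1 : ℂ) ^ (i + 1) / ((m - 1).factorial : ℂ)) *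
        ((m - 1).choose (i - 1)) * (i.factorial : ℂ) * a ^ (m - i) *
        charlier (-a) i (-(n : ℂ) - 1) = 0) := by
  set N := (-n - 1).toNat
  have hN : (N : ℤ) = -n - 1 := Int.toNat_of_nonneg (by omega)
  have hNc : -(n : ℂ) - 1 = N := by exact_mod_cast (congrArg (Int.cast : ℤ → ℂ) hN).symm
  have hexp : (m : ℤ) - N = m + n + 1 := by omega
  have dual : ∑ i ∈ Icc 1 m, ((-1 : ℂ) ^ (i + 1) / (m - 1)!) * ((m - 1).choose (i - 1)) *
        i ! * a ^ (m - i) * charlier (-a) i (-(n : ℂ) - 1) =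
      (-1 : ℂ) ^ (m + 1) * a ^ ((m : ℤ) + n + 1) * N ! * ∑ i ∈ Icc 1 m,
        charlier (-a) N i * ((-1 : ℂ) ^ (m + i) * ((m - 1).choose (i - 1)) / (m - 1)!) := by
    rw [hNc, mul_sum, ← hexp]
    exact sum_congr rfl fun i hi => charlier_dual_summand_eq ha (mem_Icc.mp hi).2 N
  refine ⟨dual, fun hnm => ?_⟩
  obtain ⟨M, rfl⟩ : ∃ M, m = M + 1 := ⟨m - 1, by omega⟩
  have hdeg : (charlierPoly (-a) N).natDegree < M :=
    (natDegree_charlierPoly_le _ _).trans_lt (by omega)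
  have hvanish := sum_Icc_neg_one_pow_mul_choose_mul_eval_eq_zero hdeg
  simp only [eval_charlierPoly] at hvanish
  rw [dual, add_tsub_cancel_right]
  refine mul_eq_zero_of_right _ ?_
  rw [← zero_div (M ! : ℂ), ← hvanish, sum_div]
  exact sum_congr rfl fun i _ => by ring

/-- For integers `n < 0` and `m ≥ 1`, with `1/p_G̃'(i+1) = (-1)^{m+i} C(m-1,i-1)/(m-1)!`,
the sum `∑_{i=1}^m ((-1)^{i+1}/(m-1)!) C(m-1,i-1) i! a^{m-i} c_i^{-a}(-n-1)` equals
`(-1)^{m+1} a^{m+n+1} (-n-1)! ∑_{i=1}^m c_{-n-1}^{-a}(i) / p_G̃'(i+1)`;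
consequently it vanishes for `1-m ≤ n < 0`. -/
theorem charlier_dual_sum (a : ℂ) (ha : a ≠ 0) (m : ℕ) (hm : 1 ≤ m)
    (n : ℤ) (hn : n < 0) :
    (∑ i ∈ Finset.Icc 1 m, ((-1 : ℂ) ^ (i + 1) / ((m - 1).factorial : ℂ)) *
        ((m - 1).choose (i - 1)) * (i.factorial : ℂ) * a ^ (m - i) *
        charlier (-a) i (-(n : ℂ) - 1) =
      (-1 : ℂ) ^ (m + 1) * a ^ ((m : ℤ) + n + 1) * (((-n - 1).toNat.factorial : ℂ)) *
        ∑ i ∈ Finset.Icc 1 m, charlier (-a) (-n - 1).toNat (i : ℂ) *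
          ((-1 : ℂ) ^ (m + i) * ((m - 1).choose (i - 1)) / ((m - 1).factorial : ℂ))) ∧
    (1 - (m : ℤ) ≤ n →
      ∑ i ∈ Finset.Icc 1 m, ((-1 : ℂ) ^ (i + 1) / ((m - 1).factorial : ℂ)) *
        ((m - 1).choose (i - 1)) * (i.factorial : ℂ) * a ^ (m - i) *
        charlier (-a) i (-(n : ℂ) - 1) = 0) :=
  charlier_dual_sum_general a ha m n hn
end

section
/- Let m ≥ 1 and let R_1,...,R_m be nonzero polynomials with pairwise distinct degrees μ_1 > μ_2 > ... > μ_m, and let l_1 < l_2 < ... < l_m be real numbers. Then the determinant det(R_j(x - l_i))_{i,j=1}^m, viewed as a polynomial in x, has degree exactly ∑_{i=1}^m μ_i - m(m-1)/2, with leading coefficient (∏_i α_i)·(-1)^{C(m,2)} (∏_{i<j}(l_j - l_i))(∏_{i<j}(μ_j - μ_i)) / ∏_{i=1}^{m-1} i!, where α_i is the leading coefficient of R_i. -/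
open Polynomial Finset

lemma aux_sum_range_card_le (s : Finset ℕ) : ∑ i ∈ range s.card, i ≤ ∑ x ∈ s, x := by
  induction s using Finset.strongInduction with
  | _ s ih =>
    rcases s.eq_empty_or_nonempty with rfl | hs
    · simp
    · have hM : s.max' hs ∈ s := s.max'_mem hs
      have hcard : (s.erase (s.max' hs)).card = s.card - 1 := Finset.card_erase_of_mem hM
      have h1 : 1 ≤ s.card := Finset.card_pos.mpr hs
      have hMle : s.card - 1 ≤ s.max' hs := by
        have hsub : s ⊆ range (s.max' hs + 1) :=
          fun x hx => mem_range.mpr (Nat.lt_succ_of_le (s.le_max' x hx))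
        have := Finset.card_le_card hsub
        simp only [card_range] at this
        omega
      have hih := ih (s.erase (s.max' hs)) (Finset.erase_ssubset hM)
      rw [hcard] at hih
      have hsum : ∑ x ∈ s, x = s.max' hs + ∑ x ∈ s.erase (s.max' hs), x :=
        (Finset.add_sum_erase s id hM).symm
      have hr : ∑ i ∈ range s.card, i = ∑ i ∈ range (s.card - 1), i + (s.card - 1) := by
        have : s.card = (s.card - 1) + 1 := by omega
        rw [this, Finset.sum_range_succ]; simp
      omega

lemma aux_sum_lt (s : Finset ℕ) {x : ℕ} (hx : x ∈ s) (hcx : s.card ≤ x) :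
    ∑ i ∈ range s.card, i < ∑ y ∈ s, y := by
  have h1 : 1 ≤ s.card := Finset.card_pos.mpr ⟨x, hx⟩
  have hcard : (s.erase x).card = s.card - 1 := Finset.card_erase_of_mem hx
  have hih := aux_sum_range_card_le (s.erase x)
  rw [hcard] at hih
  have hsum : ∑ y ∈ s, y = x + ∑ y ∈ s.erase x, y := (Finset.add_sum_erase s id hx).symm
  have hr : ∑ i ∈ range s.card, i = ∑ i ∈ range (s.card - 1), i + (s.card - 1) := by
    have : s.card = (s.card - 1) + 1 := by omega
    rw [this, Finset.sum_range_succ]; simp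
  omega

lemma aux_inj_sum_ge {m : ℕ} {b : Fin m → ℕ} (hb : Function.Injective b) :
    ∑ i ∈ range m, i ≤ ∑ i, b i := by
  have himg : (Finset.univ.image b).card = m := by
    rw [Finset.card_image_of_injective _ hb, card_univ, Fintype.card_fin]
  have := aux_sum_range_card_le (Finset.univ.image b)
  rw [himg] at this
  rwa [Finset.sum_image (fun x _ y _ h => hb h)] at this

lemma aux_inj_sum_eq {m : ℕ} {b : Fin m → ℕ} (hb : Function.Injective b)
    (hsum : ∑ i, b i = ∑ i ∈ range m, i) : ∀ i, b i < m := by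
  intro i
  by_contra hge
  push_neg at hge
  have himg : (Finset.univ.image b).card = m := by
    rw [Finset.card_image_of_injective _ hb, card_univ, Fintype.card_fin]
  have hlt := aux_sum_lt (Finset.univ.image b) (Finset.mem_image_of_mem b (mem_univ i))
    (by rw [himg]; exact hge)
  rw [himg, Finset.sum_image (fun x _ y _ h => hb h)] at hlt
  omega
lemma aux_binom (a : ℝ) (k Z : ℕ) (hZ : k ≤ Z) :
    (X - C a)^k = ∑ b ∈ range (Z+1), C ((k.choose b : ℝ) * (-a)^b) * X^(k - b) := by
  have h1 : (X - C a)^k = ∑ b ∈ range (k+1), C ((k.choose b : ℝ) * (-a)^b) * X^(k - b) := by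
    rw [sub_eq_add_neg, ← C_neg, add_comm, add_pow]
    apply Finset.sum_congr rfl
    intro b _
    simp only [C_mul, C_pow, C_neg, C_eq_natCast]
    ring
  rw [h1]
  apply Finset.sum_subset (by exact Finset.range_subset_range.mpr (by omega))
  intro b _ hb
  have : k < b := by simp only [mem_range] at hb; omega
  rw [Nat.choose_eq_zero_of_lt this]
  simp

lemma aux_prod_expand {m : ℕ} (l : Fin m → ℝ) (K : Fin m → ℕ) (Z : ℕ) (hZ : ∀ i, K i ≤ Z) :
    ∏ i, (X - C (l i))^(K i)
      = ∑ b ∈ Fintype.piFinset (fun _ : Fin m => range (Z+1)),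
          C (∏ i, (((K i).choose (b i) : ℝ) * (-(l i))^(b i))) *
            X^((∑ i, K i) - (∑ i, b i)) := by
  calc ∏ i, (X - C (l i))^(K i)
      = ∑ b ∈ Fintype.piFinset (fun _ : Fin m => range (Z+1)),
          ∏ i, (C (((K i).choose (b i) : ℝ) * (-(l i))^(b i)) * X^(K i - b i)) := by
        rw [Finset.prod_congr rfl (fun i _ => aux_binom (l i) (K i) Z (hZ i)),
          Finset.prod_univ_sum]
    _ = _ := by
        apply Finset.sum_congr rfl
        intro b _
        rw [Finset.prod_mul_distrib, ← map_prod]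
        by_cases hble : ∀ i, b i ≤ K i
        · congr 1
          rw [Finset.prod_pow_eq_pow_sum]
          congr 1
          exact Finset.sum_tsub_distrib univ (fun i _ => hble i)
        · push_neg at hble
          obtain ⟨i0, hi0⟩ := hble
          have hz : (∏ i, (((K i).choose (b i) : ℝ) * (-(l i))^(b i))) = 0 :=
            Finset.prod_eq_zero (mem_univ i0)
              (by rw [Nat.choose_eq_zero_of_lt hi0]; simp)
          rw [hz]
          simp
lemma aux_coeff_det {m : ℕ} (l : Fin m → ℝ) (K : Fin m → ℕ) (n : ℕ) :
    (Matrix.det (Matrix.of fun i j : Fin m => (X - C (l i))^(K j))).coeff n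
      = ∑ b ∈ Fintype.piFinset (fun _ : Fin m => range ((∑ i, K i) + 1)),
          (if (∑ i, K i) - (∑ i, b i) = n then
            (∏ i, (-(l i))^(b i)) *
              Matrix.det (Matrix.of fun i j : Fin m => (((K i).choose (b j) : ℝ)))
          else 0) := by
  set S := ∑ i, K i with hS
  have hdet : (Matrix.det (Matrix.of fun i j : Fin m => (X - C (l i))^(K j)))
      = ∑ π : Equiv.Perm (Fin m), ((Equiv.Perm.sign π : ℤ) : ℝ[X]) *
          ∏ i, (X - C (l i))^(K (π i)) := by
    rw [Matrix.det_apply']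
    have h1 : ∀ σ : Equiv.Perm (Fin m),
        (∏ i, (Matrix.of fun i j : Fin m => (X - C (l i))^(K j)) (σ i) i)
          = ∏ i, (X - C (l i))^(K (σ⁻¹ i)) := by
      intro σ
      calc (∏ i, (Matrix.of fun i j : Fin m => (X - C (l i))^(K j)) (σ i) i)
          = ∏ i, (X - C (l (σ i)))^(K (σ⁻¹ (σ i))) := by
            apply Finset.prod_congr rfl; intro i _; simp
        _ = _ := Equiv.prod_comp σ (fun i => (X - C (l i))^(K (σ⁻¹ i)))
    simp only [h1]
    apply Fintype.sum_bijective (fun σ : Equiv.Perm (Fin m) => σ⁻¹)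
      (Function.Involutive.bijective (fun σ => inv_inv σ))
    intro σ
    simp [Equiv.Perm.sign_inv]
  have hprod : ∀ π : Equiv.Perm (Fin m),
      (∏ i, (X - C (l i))^(K (π i)))
        = ∑ b ∈ Fintype.piFinset (fun _ : Fin m => range (S+1)),
            C (∏ i, (((K (π i)).choose (b i) : ℝ) * (-(l i))^(b i))) *
              X^(S - (∑ i, b i)) := by
    intro π
    have hZ : ∀ i, K (π i) ≤ S := by
      intro i
      rw [hS]
      exact Finset.single_le_sum (fun j _ => Nat.zero_le (K j)) (mem_univ (π i))
    have hsumK : ∑ i, K (π i) = S := Equiv.sum_comp π K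
    rw [aux_prod_expand l (fun i => K (π i)) S hZ, hsumK]
  rw [hdet]
  rw [Polynomial.finset_sum_coeff]
  simp only [hprod, Finset.mul_sum, Polynomial.finset_sum_coeff]
  rw [Finset.sum_comm]
  apply Finset.sum_congr rfl
  intro b _
  have hcoe : ∀ π : Equiv.Perm (Fin m),
      (((Equiv.Perm.sign π : ℤ) : ℝ[X]) *
        (C (∏ i, (((K (π i)).choose (b i) : ℝ) * (-(l i))^(b i))) * X^(S - (∑ i, b i)))).coeff n
      = if n = S - (∑ i, b i) then
          ((Equiv.Perm.sign π : ℤ) : ℝ) * ∏ i, (((K (π i)).choose (b i) : ℝ) * (-(l i))^(b i))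
        else 0 := by
    intro π
    rw [← mul_assoc, ← Polynomial.C_eq_intCast, ← C_mul, Polynomial.coeff_C_mul,
      Polynomial.coeff_X_pow]
    split <;> simp
  simp only [hcoe]
  by_cases h : S - (∑ i, b i) = n
  · rw [if_pos h]
    rw [Matrix.det_apply', Finset.mul_sum]
    apply Finset.sum_congr rfl
    intro π _
    rw [if_pos h.symm, Finset.prod_mul_distrib]
    simp only [Matrix.of_apply]
    ring
  · rw [if_neg h]
    have : ∀ π : Equiv.Perm (Fin m), (if n = S - (∑ i, b i) then
          ((Equiv.Perm.sign π : ℤ) : ℝ) * ∏ i, (((K (π i)).choose (b i) : ℝ) * (-(l i))^(b i))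
        else 0) = 0 := by
      intro π
      rw [if_neg (fun hh => h hh.symm)]
    simp only [this, Finset.sum_const_zero]
lemma aux_detN_zero_of_not_inj {m : ℕ} (K b : Fin m → ℕ) (h : ¬ Function.Injective b) :
    Matrix.det (Matrix.of fun i j : Fin m => (((K i).choose (b j) : ℝ))) = 0 := by
  rw [Function.not_injective_iff] at h
  obtain ⟨x, y, hxy, hne⟩ := h
  exact Matrix.det_zero_of_column_eq hne (fun k => by simp [hxy])

lemma aux_detN_zero_of_sum_lt {m : ℕ} (K b : Fin m → ℕ) (h : ∑ i, K i < ∑ i, b i) :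
    Matrix.det (Matrix.of fun i j : Fin m => (((K i).choose (b j) : ℝ))) = 0 := by
  rw [Matrix.det_apply']
  apply Finset.sum_eq_zero
  intro σ _
  have hex : ∃ i, K (σ i) < b i := by
    by_contra hc
    push_neg at hc
    have h2 : ∑ i, b i ≤ ∑ i, K (σ i) := Finset.sum_le_sum (fun i _ => hc i)
    rw [Equiv.sum_comp σ K] at h2
    omega
  obtain ⟨i0, hi0⟩ := hex
  have hz : (∏ i, (Matrix.of fun i j : Fin m => (((K i).choose (b j) : ℝ))) (σ i) i) = 0 :=
    Finset.prod_eq_zero (mem_univ i0) (by simp [Nat.choose_eq_zero_of_lt hi0])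
  rw [hz, mul_zero]

lemma aux_coeff_vanish {m : ℕ} (l : Fin m → ℝ) (K : Fin m → ℕ) (n : ℕ)
    (h : (∑ i, K i) < n + ∑ i ∈ range m, i) :
    (Matrix.det (Matrix.of fun i j : Fin m => (X - C (l i))^(K j))).coeff n = 0 := by
  rw [aux_coeff_det]
  apply Finset.sum_eq_zero
  intro b _
  by_cases he : (∑ i, K i) - (∑ i, b i) = n
  · rw [if_pos he]
    by_cases hinj : Function.Injective b
    · have hbc := aux_inj_sum_ge hinj
      by_cases hbS : ∑ i, b i ≤ ∑ i, K i
      · omega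
      · rw [aux_detN_zero_of_sum_lt K b (by omega), mul_zero]
    · rw [aux_detN_zero_of_not_inj K b hinj, mul_zero]
  · rw [if_neg he]
lemma aux_coeff_top {m : ℕ} (l : Fin m → ℝ) (K : Fin m → ℕ)
    (hc : ∑ i ∈ range m, i ≤ ∑ i, K i) :
    (Matrix.det (Matrix.of fun i j : Fin m => (X - C (l i))^(K j))).coeff
        ((∑ i, K i) - ∑ i ∈ range m, i)
      = (∏ i, ∏ j ∈ Finset.Ioi i, (l i - l j)) *
        Matrix.det (Matrix.of fun i j : Fin m => (((K i).choose (j : ℕ) : ℝ))) := by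
  classical
  set S := ∑ i, K i with hSdef
  set c := ∑ i ∈ range m, i with hcdef
  rw [aux_coeff_det]
  set f : (Fin m → ℕ) → ℝ := fun b =>
    (if S - (∑ i, b i) = S - c then
      (∏ i, (-(l i))^(b i)) *
        Matrix.det (Matrix.of fun i j : Fin m => (((K i).choose (b j) : ℝ)))
    else 0) with hf
  have hfilter :
      ∑ b ∈ (Fintype.piFinset (fun _ : Fin m => range (S + 1))).filter
          (fun b => Function.Injective b ∧ ∀ i, b i < m), f b
        = ∑ b ∈ Fintype.piFinset (fun _ : Fin m => range (S + 1)), f b := by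
    apply Finset.sum_filter_of_ne
    intro b _ hfb
    by_contra hbad
    apply hfb
    simp only [hf]
    by_cases hinj : Function.Injective b
    · by_cases he : S - (∑ i, b i) = S - c
      · rw [if_pos he]
        have h1 := aux_inj_sum_ge hinj
        by_cases hbS : ∑ i, b i ≤ S
        · have hsum : ∑ i, b i = c := by omega
          exact absurd ⟨hinj, aux_inj_sum_eq hinj hsum⟩ hbad
        · rw [aux_detN_zero_of_sum_lt K b (by omega), mul_zero]
      · exact if_neg he
    · by_cases he : S - (∑ i, b i) = S - c
      · rw [if_pos he, aux_detN_zero_of_not_inj K b hinj, mul_zero]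
      · exact if_neg he
  rw [← hfilter]
  have hlt_le : ∀ x : ℕ, x < m → x ≤ S := by
    intro x hx
    have h1 : x ≤ ∑ i ∈ range m, i :=
      Finset.single_le_sum (f := fun i => i) (fun i _ => Nat.zero_le i) (mem_range.mpr hx)
    omega
  have hperm : ∑ b ∈ (Fintype.piFinset (fun _ : Fin m => range (S + 1))).filter
          (fun b => Function.Injective b ∧ ∀ i, b i < m), f b
      = ∑ τ : Equiv.Perm (Fin m), f (fun i => (τ i : ℕ)) := by
    symm
    apply Finset.sum_bij (i := fun (τ : Equiv.Perm (Fin m)) _ => fun i => ((τ i : ℕ)))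
    · intro τ _
      rw [Finset.mem_filter]
      refine ⟨?_, fun a b hab => τ.injective (Fin.val_injective hab), fun i => (τ i).isLt⟩
      rw [Fintype.mem_piFinset]
      intro i
      exact mem_range.mpr (Nat.lt_succ_of_le (hlt_le _ (τ i).isLt))
    · intro τ1 _ τ2 _ h
      ext i
      exact congrFun h i ▸ rfl
    · intro b hb
      rw [Finset.mem_filter] at hb
      obtain ⟨_, hinj, hlt⟩ := hb
      have hginj : Function.Injective (fun i => (⟨b i, hlt i⟩ : Fin m)) := by
        intro x y hxy
        apply hinj
        exact congrArg Fin.val hxy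
      refine ⟨Equiv.ofBijective _ ((Finite.injective_iff_bijective).mp hginj), mem_univ _, ?_⟩
      funext i
      simp [Equiv.ofBijective_apply]
    · intro τ _
      rfl
  rw [hperm]
  have hτsum : ∀ τ : Equiv.Perm (Fin m), ∑ i, ((τ i : ℕ)) = c := by
    intro τ
    rw [Equiv.sum_comp τ (fun i : Fin m => (i : ℕ)), hcdef]
    exact Fin.sum_univ_eq_sum_range (fun i => i) m
  have hfτ : ∀ τ : Equiv.Perm (Fin m),
      f (fun i => (τ i : ℕ))
        = (∏ i, (-(l i))^((τ i : ℕ))) * ((Equiv.Perm.sign τ : ℤ) : ℝ) *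
          Matrix.det (Matrix.of fun i j : Fin m => (((K i).choose (j : ℕ) : ℝ))) := by
    intro τ
    simp only [hf, hτsum τ, if_pos rfl]
    have : (Matrix.of fun i j : Fin m => (((K i).choose ((τ j : ℕ)) : ℝ)))
        = (Matrix.of fun i j : Fin m => (((K i).choose (j : ℕ) : ℝ))).submatrix id τ := rfl
    rw [this, Matrix.det_permute']
    push_cast
    ring
  simp only [hfτ]
  have hvdm : ∑ τ : Equiv.Perm (Fin m),
      (∏ i, (-(l i))^((τ i : ℕ))) * ((Equiv.Perm.sign τ : ℤ) : ℝ)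
      = ∏ i, ∏ j ∈ Finset.Ioi i, (l i - l j) := by
    have h1 : ∑ τ : Equiv.Perm (Fin m),
        (∏ i, (-(l i))^((τ i : ℕ))) * ((Equiv.Perm.sign τ : ℤ) : ℝ)
        = Matrix.det ((Matrix.vandermonde (fun i => -(l i))).transpose) := by
      rw [Matrix.det_apply']
      apply Finset.sum_congr rfl
      intro τ _
      rw [mul_comm]
      congr 1
    rw [h1, Matrix.det_transpose, Matrix.det_vandermonde]
    apply Finset.prod_congr rfl
    intro i _
    apply Finset.prod_congr rfl
    intro j _
    ring
  rw [← Finset.sum_mul, hvdm]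
lemma aux_detB {m : ℕ} (K : Fin m → ℕ) :
    Matrix.det (Matrix.of fun i j : Fin m => (((K i).choose (j : ℕ) : ℝ)))
      = (∏ i : Fin m, (1 / ((i : ℕ).factorial : ℝ))) *
        ∏ i, ∏ j ∈ Finset.Ioi i, ((K j : ℝ) - (K i : ℝ)) := by
  have hentry : ∀ i j : Fin m, (((K i).choose (j : ℕ) : ℝ))
      = (1 / (((j : ℕ).factorial : ℝ))) *
        (Matrix.of fun i j : Fin m =>
          (descPochhammer ℝ (j : ℕ)).eval ((K i : ℝ))) i j := by
    intro i j
    simp only [Matrix.of_apply]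
    rw [show ((K i : ℝ)) = (((K i : ℕ) : ℝ)) from rfl,
      descPochhammer_eval_eq_descFactorial,
      Nat.descFactorial_eq_factorial_mul_choose]
    have h0 : (((j : ℕ).factorial : ℝ)) ≠ 0 := Nat.cast_ne_zero.mpr (Nat.factorial_ne_zero _)
    push_cast
    field_simp
  have h1 : Matrix.det (Matrix.of fun i j : Fin m => (((K i).choose (j : ℕ) : ℝ)))
      = Matrix.det (Matrix.of fun i j : Fin m =>
          (1 / (((j : ℕ).factorial : ℝ))) *
          (Matrix.of fun i j : Fin m =>
            (descPochhammer ℝ (j : ℕ)).eval ((K i : ℝ))) i j) := by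
    congr 1
    ext i j
    exact hentry i j
  rw [h1, Matrix.det_mul_row]
  congr 1
  rw [← Matrix.det_eval_matrixOfPolynomials_eq_det_vandermonde (fun i => ((K i : ℝ)))
    (fun j => descPochhammer ℝ (j : ℕ))
    (fun j => descPochhammer_natDegree ℝ (j : ℕ))
    (fun j => monic_descPochhammer ℝ (j : ℕ)), Matrix.det_vandermonde]
lemma aux_sign_prod {m : ℕ} (l : Fin m → ℝ) :
    (∏ i, ∏ j ∈ Finset.Ioi i, (l i - l j))
      = (-1 : ℝ)^(m.choose 2) * ∏ i, ∏ j ∈ Finset.Ioi i, (l j - l i) := by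
  have h1 : ∀ i : Fin m, ∏ j ∈ Finset.Ioi i, (l i - l j)
      = (-1 : ℝ)^((Finset.Ioi i).card) * ∏ j ∈ Finset.Ioi i, (l j - l i) := by
    intro i
    rw [← Finset.prod_const, ← Finset.prod_mul_distrib]
    apply Finset.prod_congr rfl
    intro j _
    ring
  simp only [h1]
  rw [Finset.prod_mul_distrib, Finset.prod_pow_eq_pow_sum]
  congr 2
  simp only [Fin.card_Ioi]
  rw [Fin.sum_univ_eq_sum_range (fun i => m - 1 - i) m,
    Finset.sum_range_reflect (fun i => i) m, Finset.sum_range_id, Nat.choose_two_right]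

/-- Degree and leading coefficient of the Casorati-type determinant
`det(R_j(x - l_i))` for polynomials `R_1,...,R_m` of strictly decreasing degrees
and `l_1 < ... < l_m`. -/
theorem casorati_det_degree_leadingCoeff (m : ℕ) (R : Fin m → Polynomial ℝ)
    (hR0 : ∀ i, R i ≠ 0)
    (hdeg : ∀ i j : Fin m, i < j → (R j).natDegree < (R i).natDegree)
    (l : Fin m → ℝ) (hl : StrictMono l)
    (D : Polynomial ℝ)
    (hD : D = Matrix.det (Matrix.of fun i j : Fin m => (R j).comp (X - C (l i)))) :
    D.natDegree = (∑ i, (R i).natDegree) - m * (m - 1) / 2 ∧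
    D.leadingCoeff =
      (∏ i, (R i).leadingCoeff) * (-1) ^ (m.choose 2) *
        (∏ i, ∏ j ∈ Finset.Ioi i, (l j - l i)) *
        (∏ i, ∏ j ∈ Finset.Ioi i, (((R j).natDegree : ℝ) - (R i).natDegree)) /
        ∏ i ∈ Finset.range m, (i.factorial : ℝ) := by
  classical
  set μ : Fin m → ℕ := fun i => (R i).natDegree with hμ
  set S : ℕ := ∑ i, μ i with hS
  set c : ℕ := ∑ i ∈ range m, i with hc
  have hμinj : Function.Injective μ := by
    intro i j hij
    by_contra hne
    rcases lt_trichotomy i j with h | h | h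
    · exact absurd hij (hdeg i j h).ne'
    · exact hne h
    · exact absurd hij (hdeg j i h).ne
  have hcS : c ≤ S := aux_inj_sum_ge hμinj
  have hc2 : c = m.choose 2 := by
    rw [hc, Finset.sum_range_id, Nat.choose_two_right]
  -- Step A : expansion of D
  have hD2 : D = ∑ k ∈ Fintype.piFinset (fun x : Fin m => range (μ x + 1)),
      C (∏ x, (R x).coeff (k x)) *
        Matrix.det (Matrix.of fun i j : Fin m => (X - C (l i))^(k j)) := by
    rw [hD, Matrix.det_apply']
    have hent : ∀ (i j : Fin m), (R j).comp (X - C (l i))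
        = ∑ k ∈ range (μ j + 1), C ((R j).coeff k) * (X - C (l i))^k := by
      intro i j
      rw [comp_eq_sum_left]
      exact Polynomial.sum_over_range' _ (fun n => by simp) _ (Nat.lt_succ_self _)
    have h2 : ∀ σ : Equiv.Perm (Fin m),
        (∏ x, (Matrix.of fun i j : Fin m => (R j).comp (X - C (l i))) (σ x) x)
        = ∑ k ∈ Fintype.piFinset (fun x : Fin m => range (μ x + 1)),
            C (∏ x, (R x).coeff (k x)) * ∏ x, (X - C (l (σ x)))^(k x) := by
      intro σ
      calc (∏ x, (Matrix.of fun i j : Fin m => (R j).comp (X - C (l i))) (σ x) x)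
          = ∏ x, ∑ k ∈ range (μ x + 1), C ((R x).coeff k) * (X - C (l (σ x)))^k := by
            apply Finset.prod_congr rfl
            intro x _
            simp only [Matrix.of_apply]
            exact hent (σ x) x
        _ = ∑ k ∈ Fintype.piFinset (fun x : Fin m => range (μ x + 1)),
              ∏ x, (C ((R x).coeff (k x)) * (X - C (l (σ x)))^(k x)) :=
            Finset.prod_univ_sum _ _
        _ = _ := by
            apply Finset.sum_congr rfl
            intro k _
            rw [Finset.prod_mul_distrib, ← map_prod]
    simp only [h2, Finset.mul_sum]
    rw [Finset.sum_comm]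
    apply Finset.sum_congr rfl
    intro k _
    rw [Matrix.det_apply', Finset.mul_sum]
    apply Finset.sum_congr rfl
    intro σ _
    simp only [Matrix.of_apply]
    ring
  -- coefficients of D
  have hcoeffD : ∀ n : ℕ, D.coeff n
      = ∑ k ∈ Fintype.piFinset (fun x : Fin m => range (μ x + 1)),
          (∏ x, (R x).coeff (k x)) *
            (Matrix.det (Matrix.of fun i j : Fin m => (X - C (l i))^(k j))).coeff n := by
    intro n
    rw [hD2, Polynomial.finset_sum_coeff]
    apply Finset.sum_congr rfl
    intro k _
    rw [Polynomial.coeff_C_mul]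
  -- high coefficients vanish
  have hvanish : ∀ n : ℕ, S - c < n → D.coeff n = 0 := by
    intro n hn
    rw [hcoeffD]
    apply Finset.sum_eq_zero
    intro k hk
    rw [Fintype.mem_piFinset] at hk
    have hkle : ∀ x, k x ≤ μ x := fun x => by
      have := hk x
      rw [mem_range] at this
      omega
    have hsum : ∑ x, k x ≤ S := Finset.sum_le_sum (fun x _ => hkle x)
    rw [aux_coeff_vanish l k n (by omega), mul_zero]
  -- top coefficient
  have htop : D.coeff (S - c)
      = (∏ i, (R i).leadingCoeff) * ((∏ i, ∏ j ∈ Finset.Ioi i, (l i - l j)) *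
          ((∏ i : Fin m, (1 / ((i : ℕ).factorial : ℝ))) *
            ∏ i, ∏ j ∈ Finset.Ioi i, ((μ j : ℝ) - (μ i : ℝ)))) := by
    rw [hcoeffD]
    rw [Finset.sum_eq_single μ]
    · rw [aux_coeff_top l μ hcS, aux_detB]
      rfl
    · intro k hk hkne
      rw [Fintype.mem_piFinset] at hk
      have hkle : ∀ x, k x ≤ μ x := fun x => by
        have := hk x
        rw [mem_range] at this
        omega
      have hlt : ∑ x, k x < S := by
        apply Finset.sum_lt_sum (fun x _ => hkle x)
        by_contra hno
        push_neg at hno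
        exact hkne (funext fun x => le_antisymm (hkle x) (hno x (mem_univ x)))
      rw [aux_coeff_vanish l k (S - c) (by omega), mul_zero]
    · intro hμmem
      exact absurd (Fintype.mem_piFinset.mpr fun x => mem_range.mpr (Nat.lt_succ_self _)) hμmem
  -- the target value
  set lc : ℝ := (∏ i, (R i).leadingCoeff) * (-1) ^ (m.choose 2) *
        (∏ i, ∏ j ∈ Finset.Ioi i, (l j - l i)) *
        (∏ i, ∏ j ∈ Finset.Ioi i, ((μ j : ℝ) - (μ i : ℝ))) /
        ∏ i ∈ Finset.range m, ((i.factorial : ℝ)) with hlc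
  have hprod_fact : (∏ i : Fin m, (1 / ((i : ℕ).factorial : ℝ)))
      = 1 / ∏ i ∈ Finset.range m, ((i.factorial : ℝ)) := by
    rw [Fin.prod_univ_eq_prod_range (fun i => 1 / ((i.factorial : ℝ))) m]
    rw [one_div, ← Finset.prod_inv_distrib]
    simp [one_div]
  have htop2 : D.coeff (S - c) = lc := by
    rw [htop, hlc, aux_sign_prod l, hprod_fact]
    have hfne : (∏ i ∈ Finset.range m, ((i.factorial : ℝ))) ≠ 0 := by
      apply Finset.prod_ne_zero_iff.mpr
      intro i _
      exact Nat.cast_ne_zero.mpr (Nat.factorial_ne_zero i)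
    field_simp
  have hlcne : lc ≠ 0 := by
    rw [hlc]
    apply div_ne_zero
    · apply mul_ne_zero
      apply mul_ne_zero
      apply mul_ne_zero
      · exact Finset.prod_ne_zero_iff.mpr (fun i _ => leadingCoeff_ne_zero.mpr (hR0 i))
      · exact pow_ne_zero _ (by norm_num)
      · apply Finset.prod_ne_zero_iff.mpr
        intro i _
        apply Finset.prod_ne_zero_iff.mpr
        intro j hj
        exact sub_ne_zero.mpr (hl (mem_Ioi.mp hj)).ne'
      · apply Finset.prod_ne_zero_iff.mpr
        intro i _
        apply Finset.prod_ne_zero_iff.mpr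
        intro j hj
        have := hdeg i j (mem_Ioi.mp hj)
        exact sub_ne_zero.mpr (fun hh => absurd (Nat.cast_injective hh) this.ne)
    · apply Finset.prod_ne_zero_iff.mpr
      intro i _
      exact Nat.cast_ne_zero.mpr (Nat.factorial_ne_zero i)
  have hdegD : D.natDegree = S - c := by
    apply le_antisymm
    · exact Polynomial.natDegree_le_iff_coeff_eq_zero.mpr (fun n hn => hvanish n hn)
    · apply Polynomial.le_natDegree_of_ne_zero
      rw [htop2]
      exact hlcne
  constructor
  · rw [hdegD, hc2, Nat.choose_two_right]
  · rw [Polynomial.leadingCoeff, hdegD, htop2, hlc]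
end
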